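/- Let α₁ and α₂ be two Pauli assignments (possibly with different numbers of qubits) of the same hypergram (V,H,G). Let a₁ be a classical assignment and let S = {h ∈ H : sgn_{a₁}(h) = sgn_{α₁}(h)} be the set of hyperedges satisfied by a₁ for α₁. Then there exists a classical assignment a₂ such that {h ∈ H : sgn_{a₂}(h) = sgn_{α₂}(h)} = S. -/

import Mathlib

open scoped Classical
open Matrix

noncomputable section

/-- The space of `n`-qubit operators, realized as matrices indexed by
`Fin n → Fin 2` (the `n`-fold tensor-product index). -/
abbrev QMat (n : ℕ) := Matrix (Fin n → Fin 2) (Fin n → Fin 2) ℂ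

/-- The four Pauli matrices `I, X, Y, Z`. -/
def pauliMat : Fin 4 → Matrix (Fin 2) (Fin 2) ℂ
  | ⟨0, _⟩ => 1
  | ⟨1, _⟩ => !![0, 1; 1, 0]
  | ⟨2, _⟩ => !![0, -Complex.I; Complex.I, 0]
  | ⟨3, _⟩ => !![1, 0; 0, -1]

/-- The `n`-fold Kronecker (tensor) product `G₁ ⊗ ⋯ ⊗ Gₙ` of the Pauli matrices
selected by `g : Fin n → Fin 4`, as a matrix indexed by `Fin n → Fin 2`. -/
def nPauli {n : ℕ} (g : Fin n → Fin 4) : QMat n :=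
  Matrix.of fun r c => ∏ k, pauliMat (g k) (r k) (c k)

/-- `M` is an `n`-qubit Pauli observable. -/
def IsPauliObs (n : ℕ) (M : QMat n) : Prop := ∃ g : Fin n → Fin 4, M = nPauli g

/-- `I^⊗n`, the `n`-fold tensor product of the identity. -/
def idN (n : ℕ) : QMat n := nPauli (fun _ => ⟨0, by omega⟩)

/-- Product of `f` over a finite set of naturals, taken in increasing order
(well-defined without commutativity; agrees with the unordered product when the
factors pairwise commute). -/
def natFinsetProd {M : Type*} [Monoid M] (s : Finset ℕ) (f : ℕ → M) : M :=
  ((s.sort (· ≤ ·)).map f).prod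

/-- `(V,H,G)` is a hypergram: `V` a nonempty finite vertex set, `H` a set of
nonempty hyperedges covering `V`, `G` a set of 2-element edges on `V` forming a
simple reduced graph, no edge of `G` being contained in a hyperedge of `H`. -/
def IsHypergram (V : Finset ℕ) (H G : Finset (Finset ℕ)) : Prop :=
  V.Nonempty ∧
  (∀ h ∈ H, h ⊆ V ∧ h.Nonempty) ∧
  (∀ v ∈ V, ∃ h ∈ H, v ∈ h) ∧
  (∀ e ∈ G, e ⊆ V ∧ e.card = 2) ∧
  (∀ v ∈ V, ∃ e ∈ G, v ∈ e) ∧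
  (∀ v ∈ V, ∀ w ∈ V,
    (∀ u ∈ V, (({v, u} : Finset ℕ) ∈ G ↔ ({w, u} : Finset ℕ) ∈ G)) → v = w) ∧
  (∀ e ∈ G, ∀ h ∈ H, ¬ e ⊆ h)

/-- `α` is an `n`-qubit Pauli assignment of the hypergram `(V,H,G)`. -/
def IsPauliAssignment (V : Finset ℕ) (H G : Finset (Finset ℕ)) (n : ℕ)
    (α : ℕ → QMat n) : Prop :=
  (∀ v ∈ V, IsPauliObs n (α v)) ∧
  (∀ v ∈ V, α v ≠ idN n) ∧
  (∀ v₁ ∈ V, ∀ v₂ ∈ V, α v₁ = α v₂ → v₁ = v₂) ∧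
  (∀ v₁ ∈ V, ∀ v₂ ∈ V, v₁ ≠ v₂ →
    (α v₁ * α v₂ = -(α v₂ * α v₁) ↔ ({v₁, v₂} : Finset ℕ) ∈ G)) ∧
  (∀ h ∈ H, natFinsetProd h α = idN n ∨ natFinsetProd h α = -(idN n))

/-- The sign `sgn_α(h) ∈ {−1,1}` of a hyperedge `h`: `∏_{v∈h} α(v) = sgn_α(h)·I^⊗n`. -/
def quantumSgn {n : ℕ} (α : ℕ → QMat n) (h : Finset ℕ) : ℤ :=
  if natFinsetProd h α = idN n then 1 else -1

/-- The sign `sgn_a(h) = ∏_{v∈h} a(v)` of a hyperedge for a classical assignment. -/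
def classicalSgn (a : ℕ → ℤ) (h : Finset ℕ) : ℤ := ∏ v ∈ h, a v

/-- The contextuality degree of a Pauli assignment: the minimum over classical
assignments `a : V → {−1,1}` of the number of hyperedges whose signs differ. -/
def contextualityDegree {n : ℕ} (H : Finset (Finset ℕ)) (α : ℕ → QMat n) : ℕ :=
  sInf { d : ℕ | ∃ a : ℕ → ℤ, (∀ v, a v = 1 ∨ a v = -1) ∧
    d = (H.filter (fun h => quantumSgn α h ≠ classicalSgn a h)).card }

/-- The context (incidence) matrix of a hypergram over 𝔽₂. -/
def contextMatrix (V : Finset ℕ) (H : Finset (Finset ℕ)) :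
    Matrix {h // h ∈ H} {v // v ∈ V} (ZMod 2) :=
  Matrix.of fun h v => if v.1 ∈ h.1 then 1 else 0

/-- The anticommutation (adjacency) matrix of a hypergram over 𝔽₂. -/
def anticommMatrix (V : Finset ℕ) (G : Finset (Finset ℕ)) :
    Matrix {v // v ∈ V} {v // v ∈ V} (ZMod 2) :=
  Matrix.of fun i j => if ({i.1, j.1} : Finset ℕ) ∈ G then 1 else 0

/-- The standard symplectic form on `𝔽₂^{2n}`:
`⟨x,y⟩ = Σ_{k=1}^{n} (x_{2k−1} y_{2k} + x_{2k} y_{2k−1})`. -/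
def sympForm (n : ℕ) (x y : Fin (2 * n) → ZMod 2) : ZMod 2 :=
  ∑ k : Fin n,
    (x ⟨2 * k.1, by have := k.2; omega⟩ * y ⟨2 * k.1 + 1, by have := k.2; omega⟩ +
     x ⟨2 * k.1 + 1, by have := k.2; omega⟩ * y ⟨2 * k.1, by have := k.2; omega⟩)

/-- The single-qubit encoding `ψ(I)=(0,0), ψ(X)=(0,1), ψ(Y)=(1,1), ψ(Z)=(1,0)`. -/
def psi4 : Fin 4 → (ZMod 2) × (ZMod 2)
  | ⟨0, _⟩ => (0, 0)
  | ⟨1, _⟩ => (0, 1)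
  | ⟨2, _⟩ => (1, 1)
  | ⟨3, _⟩ => (1, 0)

/-- The encoding `ψ` of an `n`-qubit Pauli observable (given by its tensor
factors `g`) as a vector of `𝔽₂^{2n}`, concatenating the per-factor encodings. -/
def psiVec {n : ℕ} (g : Fin n → Fin 4) : Fin (2 * n) → ZMod 2 := fun idx =>
  if idx.1 % 2 = 0 then (psi4 (g ⟨idx.1 / 2, by have := idx.2; omega⟩)).1
  else (psi4 (g ⟨idx.1 / 2, by have := idx.2; omega⟩)).2

/-- All pairs of elements of `S` commute. -/
def PairComm {n : ℕ} (S : Finset (QMat n)) : Prop := ∀ a ∈ S, ∀ b ∈ S, a * b = b * a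

/-- The (well-defined) product of a finite set of pairwise commuting matrices. -/
def commProd {n : ℕ} (S : Finset (QMat n)) (h : PairComm S) : QMat n :=
  S.noncommProd id (fun a ha b hb _ => h a ha b hb)

/-- Pairwise commutation is inherited by subsets. -/
def pairCommOfSubset {n : ℕ} {S T : Finset (QMat n)} (hST : S ⊆ T) (h : PairComm T) :
    PairComm S := fun a ha b hb => h a (hST ha) b (hST hb)

/-- `Q` (pairwise commuting) is independent: no nonempty subset has product `±I^⊗n`. -/
def IsIndep {n : ℕ} (Q : Finset (QMat n)) (hQ : PairComm Q) : Prop :=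
  ∀ S : Finset (QMat n), ∀ (hS : S ⊆ Q), S.Nonempty →
    commProd S (pairCommOfSubset hS hQ) ≠ idN n ∧
    commProd S (pairCommOfSubset hS hQ) ≠ -(idN n)

/-- The vertex set `{1, …, 15}`. -/
def V15 : Finset ℕ := Finset.Icc 1 15

/-- The 15 lines of the doily. -/
def doilyLines : Finset (Finset ℕ) :=
  { {1,2,3}, {1,8,9}, {1,10,11}, {2,4,6}, {2,5,7}, {3,12,15}, {3,13,14},
    {4,8,12}, {4,10,14}, {5,8,13}, {5,10,15}, {6,9,15}, {6,11,13},
    {7,9,14}, {7,11,12} }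

/-- The 10 lines of the two-spread `H_{2s}`. -/
def twoSpreadLines : Finset (Finset ℕ) :=
  { {1,2,3}, {1,10,11}, {2,4,6}, {3,13,14}, {4,8,12}, {5,8,13}, {5,10,15},
    {6,9,15}, {7,9,14}, {7,11,12} }

/-- The anticommutation graph `G_d = G_{2s}`: pairs of distinct vertices not on a
common doily line. -/
def doilyG : Finset (Finset ℕ) :=
  (V15.powersetCard 2).filter (fun e => ∀ h ∈ doilyLines, ¬ e ⊆ h)

/-!
The tensor products `β v = α₁ v ⊗ α₂ v` pairwise commute: a pair anticommutes under `α₁` iff it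
does under `α₂`, and two sign flips cancel. Each hyperedge product of `β` is
`sgn_{α₁}(h) · sgn_{α₂}(h) · I`. Commuting involutions have a common eigenvector, whose eigenvalues
`a v = ±1` form a classical assignment with `sgn_a = sgn_{α₁} · sgn_{α₂}`; then `a₂ = a₁ · a`
satisfies exactly the hyperedges that `a₁` does.
-/

open scoped Kronecker

instance Matrix.isAddTorsionFree {m n α : Type*} [AddMonoid α] [IsAddTorsionFree α] :
    IsAddTorsionFree (Matrix m n α) :=
  inferInstanceAs (IsAddTorsionFree (m → n → α))

section KroneckerPi

variable {ι d R : Type*} [Fintype ι] [CommSemiring R]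

def kroneckerPi (M : ι → Matrix d d R) : Matrix (ι → d) (ι → d) R :=
  Matrix.of fun r c => ∏ k, M k (r k) (c k)

theorem kroneckerPi_mul [DecidableEq ι] [Fintype d] (M N : ι → Matrix d d R) :
    kroneckerPi M * kroneckerPi N = kroneckerPi fun k => M k * N k := by
  ext r c
  simp only [kroneckerPi, Matrix.mul_apply, Matrix.of_apply, Finset.prod_univ_sum,
    Fintype.piFinset_univ, Finset.prod_mul_distrib]

theorem kroneckerPi_one [DecidableEq ι] [DecidableEq d] :
    kroneckerPi (fun _ : ι => (1 : Matrix d d R)) = 1 := by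
  ext r c
  by_cases hrc : r = c
  · subst hrc
    simp [kroneckerPi, Matrix.one_apply]
  · obtain ⟨k, hk⟩ := Function.ne_iff.mp hrc
    simp only [kroneckerPi, Matrix.of_apply, Matrix.one_apply_ne hrc]
    exact Finset.prod_eq_zero (Finset.mem_univ k) (Matrix.one_apply_ne hk)

theorem kroneckerPi_smul (c : ι → R) (M : ι → Matrix d d R) :
    kroneckerPi (fun k => c k • M k) = (∏ k, c k) • kroneckerPi M := by
  ext r r'
  simp [kroneckerPi, Finset.prod_mul_distrib]

end KroneckerPi

theorem pauliMat_mul_self (a : Fin 4) : pauliMat a * pauliMat a = 1 := by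
  fin_cases a <;> simp [pauliMat, Matrix.one_fin_two]

theorem pauliMat_mul_comm_sign (a b : Fin 4) :
    ∃ u : ℤˣ, pauliMat a * pauliMat b = ((u : ℤ) : ℂ) • (pauliMat b * pauliMat a) := by
  fin_cases a <;> fin_cases b <;>
    first
      | (refine ⟨1, ?_⟩; simp [pauliMat]; done)
      | (refine ⟨-1, ?_⟩; simp [pauliMat])

theorem nPauli_eq_kroneckerPi {n : ℕ} (g : Fin n → Fin 4) :
    nPauli g = kroneckerPi fun k => pauliMat (g k) := rfl

theorem idN_eq_one (n : ℕ) : idN n = 1 :=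
  kroneckerPi_one

theorem nPauli_mul_self {n : ℕ} (g : Fin n → Fin 4) : nPauli g * nPauli g = 1 := by
  simp only [nPauli_eq_kroneckerPi, kroneckerPi_mul, pauliMat_mul_self, kroneckerPi_one]

theorem nPauli_commute_or_anticommute {n : ℕ} (g g' : Fin n → Fin 4) :
    Commute (nPauli g) (nPauli g') ∨ nPauli g * nPauli g' = -(nPauli g' * nPauli g) := by
  choose u hu using fun k => pauliMat_mul_comm_sign (g k) (g' k)
  have hprod : nPauli g * nPauli g' = (((∏ k, u k : ℤˣ) : ℤ) : ℂ) • (nPauli g' * nPauli g) := by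
    simp only [nPauli_eq_kroneckerPi, kroneckerPi_mul, hu, kroneckerPi_smul]
    push_cast
    rfl
  rcases Int.units_eq_one_or (∏ k, u k) with h | h
  · left; simpa [h, Commute, SemiconjBy] using hprod
  · right; simpa [h] using hprod

theorem natFinsetProd_kronecker {m n R : Type*} [CommSemiring R] [Fintype m] [Fintype n]
    [DecidableEq m] [DecidableEq n] (s : Finset ℕ) (f : ℕ → Matrix m m R)
    (g : ℕ → Matrix n n R) :
    natFinsetProd s (fun v => f v ⊗ₖ g v) = natFinsetProd s f ⊗ₖ natFinsetProd s g := by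
  unfold natFinsetProd
  induction s.sort (· ≤ ·) with
  | nil => simp
  | cons v l ih => simp [ih, mul_kronecker_mul]

namespace IsPauliAssignment

variable {V : Finset ℕ} {H G : Finset (Finset ℕ)} {n : ℕ} {α : ℕ → QMat n}

theorem mul_self (hα : IsPauliAssignment V H G n α) {v : ℕ} (hv : v ∈ V) : α v * α v = 1 := by
  obtain ⟨g, hg⟩ := hα.1 v hv
  rw [hg, nPauli_mul_self]

theorem commute_of_notMem (hα : IsPauliAssignment V H G n α) {v w : ℕ} (hv : v ∈ V) (hw : w ∈ V)
    (hvw : v ≠ w) (hG : {v, w} ∉ G) : Commute (α v) (α w) := by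
  obtain ⟨g, hg⟩ := hα.1 v hv
  obtain ⟨g', hg'⟩ := hα.1 w hw
  refine (nPauli_commute_or_anticommute g g').elim (fun h => hg ▸ hg' ▸ h) fun h => ?_
  exact absurd ((hα.2.2.2.1 v hv w hw hvw).mp (hg ▸ hg' ▸ h)) hG

theorem natFinsetProd_eq_quantumSgn_smul (hα : IsPauliAssignment V H G n α) {h : Finset ℕ}
    (hh : h ∈ H) : natFinsetProd h α = quantumSgn α h • (1 : QMat n) := by
  have hneg : -(1 : QMat n) ≠ 1 := fun h => one_ne_zero (neg_eq_self.mp h)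
  rcases hα.2.2.2.2 h hh with hp | hp <;> rw [quantumSgn] <;> simp_all [idN_eq_one]

theorem commute_kronecker {n' : ℕ} {α' : ℕ → QMat n'} (hα : IsPauliAssignment V H G n α)
    (hα' : IsPauliAssignment V H G n' α') {v w : ℕ} (hv : v ∈ V) (hw : w ∈ V) :
    Commute (α v ⊗ₖ α' v) (α w ⊗ₖ α' w) := by
  by_cases hvw : v = w
  · rw [hvw]
  by_cases hG : {v, w} ∈ G
  · have h₁ := (hα.2.2.2.1 v hv w hw hvw).mpr hG
    have h₂ := (hα'.2.2.2.1 v hv w hw hvw).mpr hG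
    simp only [Commute, SemiconjBy, ← mul_kronecker_mul, h₁, h₂]
    ext
    simp
  · have h₁ := hα.commute_of_notMem hv hw hvw hG
    have h₂ := hα'.commute_of_notMem hv hw hvw hG
    simp only [Commute, SemiconjBy, ← mul_kronecker_mul, h₁.eq, h₂.eq]

end IsPauliAssignment

section CommutingInvolutions

variable {A : Type*} [Ring A]

theorem mul_one_add_smul_self {b : A} {u : ℤ} (hb : b * b = 1) (hu : u * u = 1) :
    b * (1 + u • b) = u • (1 + u • b) := by
  rw [mul_add, mul_one, mul_smul_comm, hb, smul_add, smul_smul, hu, one_smul, add_comm]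

/-- Refine the eigenvector one involution `b j` at a time, replacing `P` by `(1 ± b j) * P`: the two
candidates sum to `2 • P ≠ 0`, so one of them is nonzero. -/
theorem exists_common_eigenvector [IsAddTorsionFree A] [Nontrivial A] {ι : Type*}
    [DecidableEq ι] (s : Finset ι) (b : ι → A) (hcomm : ∀ i ∈ s, ∀ j ∈ s, Commute (b i) (b j))
    (hsq : ∀ i ∈ s, b i * b i = 1) :
    ∃ a : ι → ℤ, (∀ i, a i = 1 ∨ a i = -1) ∧ ∃ P : A, P ≠ 0 ∧ ∀ i ∈ s, b i * P = a i • P := by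
  induction s using Finset.induction_on with
  | empty => exact ⟨1, fun _ => Or.inl rfl, 1, one_ne_zero, by simp⟩
  | insert j s hj ih =>
    obtain ⟨a, ha, P, hP, hbP⟩ := ih (fun i hi k hk => hcomm i (by simp [hi]) k (by simp [hk]))
      (fun i hi => hsq i (by simp [hi]))
    obtain ⟨u, hu, hQ⟩ : ∃ u : ℤ, (u = 1 ∨ u = -1) ∧ (1 + u • b j) * P ≠ 0 := by
      by_contra! h
      have hsum : (1 + (1 : ℤ) • b j) * P + (1 + (-1 : ℤ) • b j) * P = (2 : ℕ) • P := by
        simp only [one_smul, neg_smul, ← add_mul]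
        noncomm_ring
      rw [h 1 (Or.inl rfl), h (-1) (Or.inr rfl), add_zero, eq_comm, ← nsmul_zero 2] at hsum
      exact hP (nsmul_right_injective two_ne_zero hsum)
    refine ⟨Function.update a j u, fun i => ?_, _, hQ, fun i hi => ?_⟩
    · rcases eq_or_ne i j with rfl | hij <;> simp [*]
    rcases Finset.mem_insert.mp hi with rfl | hi
    · have hu2 : u * u = 1 := by rcases hu with rfl | rfl <;> norm_num
      rw [Function.update_self, ← mul_assoc, mul_one_add_smul_self (hsq i (by simp)) hu2,
        smul_mul_assoc]
    · have hij : Commute (b i) (1 + u • b j) :=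
        (Commute.one_right _).add_right ((hcomm i (by simp [hi]) j (by simp)).smul_right u)
      rw [Function.update_of_ne (ne_of_mem_of_not_mem hi hj), ← mul_assoc, hij.eq, mul_assoc,
        hbP i hi, mul_smul_comm]

theorem list_prod_map_mul_eq_smul {ι : Type*} (b : ι → A) (a : ι → ℤ) (P : A) (l : List ι)
    (hP : ∀ i ∈ l, b i * P = a i • P) : (l.map b).prod * P = (l.map a).prod • P := by
  induction l with
  | nil => simp
  | cons i l ih =>
    simp only [List.map_cons, List.prod_cons, mul_assoc, List.forall_mem_cons] at hP ⊢
    rw [ih hP.2, mul_smul_comm, hP.1, smul_smul, mul_comm]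

theorem exists_classicalSgn_eq [IsAddTorsionFree A] [Nontrivial A] (V : Finset ℕ) (β : ℕ → A)
    (hcomm : ∀ v ∈ V, ∀ w ∈ V, Commute (β v) (β w)) (hsq : ∀ v ∈ V, β v * β v = 1) :
    ∃ a : ℕ → ℤ, (∀ v, a v = 1 ∨ a v = -1) ∧
      ∀ h ⊆ V, ∀ σ : ℤ, natFinsetProd h β = σ • 1 → classicalSgn a h = σ := by
  obtain ⟨a, ha, P, hP, hβP⟩ := exists_common_eigenvector V β hcomm hsq
  refine ⟨a, ha, fun h hV σ hσ => smul_left_injective ℤ hP ?_⟩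
  have hsort : ((h.sort (· ≤ ·)).map a).prod = classicalSgn a h := by
    rw [classicalSgn, ← List.prod_toFinset a (h.sort_nodup _), Finset.sort_toFinset]
  calc classicalSgn a h • P = natFinsetProd h β * P := by
        rw [← hsort, natFinsetProd, list_prod_map_mul_eq_smul β a P _ fun v hv =>
          hβP v (hV ((Finset.mem_sort _).mp hv))]
    _ = σ • P := by rw [hσ, smul_one_mul]

end CommutingInvolutions

/-- A classical assignment can be transferred between two Pauli
assignments of the same hypergram, keeping the same set of satisfied hyperedges. -/
theorem classical_assignment_transfer
    (V : Finset ℕ) (H G : Finset (Finset ℕ)) (hgram : IsHypergram V H G)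
    {n₁ n₂ : ℕ} (α₁ : ℕ → QMat n₁) (α₂ : ℕ → QMat n₂)
    (h₁ : IsPauliAssignment V H G n₁ α₁) (h₂ : IsPauliAssignment V H G n₂ α₂)
    (a₁ : ℕ → ℤ) (ha₁ : ∀ v, a₁ v = 1 ∨ a₁ v = -1) :
    ∃ a₂ : ℕ → ℤ, (∀ v, a₂ v = 1 ∨ a₂ v = -1) ∧
      ∀ h ∈ H, (classicalSgn a₂ h = quantumSgn α₂ h ↔
                 classicalSgn a₁ h = quantumSgn α₁ h) := by
  obtain ⟨a, ha, hsgn⟩ := exists_classicalSgn_eq V (fun v => α₁ v ⊗ₖ α₂ v)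
    (fun v hv w hw => h₁.commute_kronecker h₂ hv hw)
    (fun v hv => by rw [← mul_kronecker_mul, h₁.mul_self hv, h₂.mul_self hv, one_kronecker_one])
  refine ⟨fun v => a₁ v * a v, fun v => ?_, fun h hh => ?_⟩
  · rcases ha₁ v with e | e <;> rcases ha v with e' | e' <;> simp [e, e']
  have ha_sgn : classicalSgn a h = quantumSgn α₁ h * quantumSgn α₂ h :=
    hsgn h (hgram.2.1 h hh).1 _ <| by
      rw [natFinsetProd_kronecker, h₁.natFinsetProd_eq_quantumSgn_smul hh,
        h₂.natFinsetProd_eq_quantumSgn_smul hh, smul_kronecker, kronecker_smul, one_kronecker_one,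
        smul_smul]
  rw [classicalSgn, Finset.prod_mul_distrib, ← classicalSgn, ← classicalSgn, ha_sgn]
  unfold quantumSgn
  split_ifs <;> constructor <;> intro <;> linarith

end
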